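/- arXiv:2402.17247 — 5 statements merged into one kernel-verified Lean document; each statement's English description precedes it below -/
import Mathlib

section
/- Equal feedback gains force equal normalized Riccati factors: Let A ∈ ℝ^{n×n} be invertible and B ∈ ℝ^{n×p} have full column rank. Let R, R̂ ∈ ℝ^{p×p} be invertible, P, P̂ ∈ ℝ^{n×n}, and suppose R + Bᵀ P B and R̂ + Bᵀ P̂ B are invertible. If (R + Bᵀ P B)⁻¹ Bᵀ P A = (R̂ + Bᵀ P̂ B)⁻¹ Bᵀ P̂ A, then R⁻¹ Bᵀ P = R̂⁻¹ Bᵀ P̂. -/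
open Matrix

/-- equal one-step LQT feedback gains force equal normalized Riccati
factors: with `A` invertible, `B` of full column rank, `R, R̂, R + BᵀPB, R̂ + BᵀP̂B`
invertible, `(R + BᵀPB)⁻¹BᵀPA = (R̂ + BᵀP̂B)⁻¹BᵀP̂A` implies `R⁻¹BᵀP = R̂⁻¹BᵀP̂`. -/
theorem equal_gains_equal_factors {n p : ℕ}
    (A : Matrix (Fin n) (Fin n) ℝ) (B : Matrix (Fin n) (Fin p) ℝ)
    (R Rh : Matrix (Fin p) (Fin p) ℝ) (P Ph : Matrix (Fin n) (Fin n) ℝ)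
    (hA : IsUnit A) (hB : B.rank = p)
    (hR : IsUnit R) (hRh : IsUnit Rh)
    (hRP : IsUnit (R + Bᵀ * P * B)) (hRPh : IsUnit (Rh + Bᵀ * Ph * B))
    (hgain : (R + Bᵀ * P * B)⁻¹ * Bᵀ * P * A = (Rh + Bᵀ * Ph * B)⁻¹ * Bᵀ * Ph * A) :
    R⁻¹ * Bᵀ * P = Rh⁻¹ * Bᵀ * Ph := by
  have hAd : IsUnit A.det := (Matrix.isUnit_iff_isUnit_det A).mp hA
  have hRd : IsUnit R.det := (Matrix.isUnit_iff_isUnit_det R).mp hR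
  have hRhd : IsUnit Rh.det := (Matrix.isUnit_iff_isUnit_det Rh).mp hRh
  have hMd : IsUnit (R + Bᵀ * P * B).det := (Matrix.isUnit_iff_isUnit_det _).mp hRP
  have hMhd : IsUnit (Rh + Bᵀ * Ph * B).det := (Matrix.isUnit_iff_isUnit_det _).mp hRPh
  set M := R + Bᵀ * P * B with hMdef
  set Mh := Rh + Bᵀ * Ph * B with hMhdef
  set G := M⁻¹ * (Bᵀ * P) with hGdef
  set X := R⁻¹ * (Bᵀ * P) with hXdef
  set Y := Rh⁻¹ * (Bᵀ * Ph) with hYdef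
  -- cancel A in hgain
  have hG2 : Mh⁻¹ * (Bᵀ * Ph) = G := by
    have h := congrArg (fun Z => Z * A⁻¹) hgain
    simp only [Matrix.mul_assoc] at h
    rw [Matrix.mul_nonsing_inv _ hAd] at h
    simp only [Matrix.mul_one] at h
    exact h.symm
  -- basic cancellation facts
  have hMG : M * G = Bᵀ * P := Matrix.mul_nonsing_inv_cancel_left _ _ hMd
  have hMhG : Mh * G = Bᵀ * Ph := by
    rw [← hG2]; exact Matrix.mul_nonsing_inv_cancel_left _ _ hMhd
  have hRX : R * X = Bᵀ * P := Matrix.mul_nonsing_inv_cancel_left _ _ hRd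
  have hRhY : Rh * Y = Bᵀ * Ph := Matrix.mul_nonsing_inv_cancel_left _ _ hRhd
  -- X = G + X * (B * G)
  have expand : M * G = R * G + Bᵀ * P * (B * G) := by
    rw [hMdef, Matrix.add_mul, Matrix.mul_assoc]
  have hX : X = G + X * (B * G) := by
    have key : R * (G + X * (B * G)) = R * X := by
      rw [Matrix.mul_add, ← Matrix.mul_assoc R X, hRX, ← expand, hMG]
    have h2 := congrArg (fun Z => R⁻¹ * Z) key
    simpa only [Matrix.nonsing_inv_mul_cancel_left _ _ hRd] using h2.symm
  have expandh : Mh * G = Rh * G + Bᵀ * Ph * (B * G) := by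
    rw [hMhdef, Matrix.add_mul, Matrix.mul_assoc]
  have hY : Y = G + Y * (B * G) := by
    have key : Rh * (G + Y * (B * G)) = Rh * Y := by
      rw [Matrix.mul_add, ← Matrix.mul_assoc Rh Y, hRhY, ← expandh, hMhG]
    have h2 := congrArg (fun Z => Rh⁻¹ * Z) key
    simpa only [Matrix.nonsing_inv_mul_cancel_left _ _ hRhd] using h2.symm
  -- G + G * (B * X) = X
  have expandX : M * X = R * X + Bᵀ * P * (B * X) := by
    rw [hMdef, Matrix.add_mul, Matrix.mul_assoc]
  have hGX : G + G * (B * X) = X := by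
    have key : M * (G + G * (B * X)) = M * X := by
      rw [Matrix.mul_add, ← Matrix.mul_assoc M G, hMG, expandX, hRX]
    have h2 := congrArg (fun Z => M⁻¹ * Z) key
    simpa only [Matrix.nonsing_inv_mul_cancel_left _ _ hMd] using h2
  -- right inverse of (1 - B*G)
  have hBG : B * G + (B * G) * (B * X) = B * X := by
    rw [Matrix.mul_assoc B G, ← Matrix.mul_add, hGX]
  have hN : (1 - B * G) * (1 + B * X) = 1 := by
    calc (1 - B * G) * (1 + B * X)
        = 1 + B * X - (B * G + (B * G) * (B * X)) := by
          simp only [Matrix.sub_mul, Matrix.mul_add, Matrix.one_mul, Matrix.mul_one]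
          abel
      _ = 1 := by rw [hBG]; abel
  -- conclude
  have hXG : X * (1 - B * G) = G := by
    rw [Matrix.mul_sub, Matrix.mul_one]
    nth_rewrite 1 [hX]
    abel
  have hYG : Y * (1 - B * G) = G := by
    rw [Matrix.mul_sub, Matrix.mul_one]
    nth_rewrite 1 [hY]
    abel
  have hXY : X = Y := by
    have h1 : X * ((1 - B * G) * (1 + B * X)) = Y * ((1 - B * G) * (1 + B * X)) := by
      rw [← Matrix.mul_assoc X (1 - B * G) (1 + B * X),
          ← Matrix.mul_assoc Y (1 - B * G) (1 + B * X), hXG, hYG]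
    rwa [hN, Matrix.mul_one, Matrix.mul_one] at h1
  rw [Matrix.mul_assoc, Matrix.mul_assoc]
  exact hXY
end

section
/- Controllability step of Theorem 1: Let A ∈ ℝ^{n×n}, B ∈ ℝ^{n×p} with the controllability matrix [B AB ⋯ A^{n−1}B] of rank n, and let K ≥ 2n. Suppose vectors Δq, Δη_1,…,Δη_{K+1} ∈ ℝ^n satisfy Δη_{K+1} = Δq, Δη_k = Δq + Aᵀ Δη_{k+1} for k = 1,…,K, and Bᵀ Δη_{k+1} = 0 for k = 0,…,K. Then Δq = 0. -/
open Matrix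

noncomputable section

private lemma mulVec_sum' {m q : Type*} [Fintype q] (M : Matrix m q ℝ)
    {ι : Type*} (s : Finset ι) (f : ι → q → ℝ) :
    M.mulVec (∑ i ∈ s, f i) = ∑ i ∈ s, M.mulVec (f i) := by
  have h := map_sum M.mulVecLin f s
  simpa only [Matrix.mulVecLin_apply] using h

/-- The controllability matrix `[B AB ⋯ A^{n−1}B]`. -/
def ctrbMat {n p : ℕ} (A : Matrix (Fin n) (Fin n) ℝ) (B : Matrix (Fin n) (Fin p) ℝ) :
    Matrix (Fin n) (Fin n × Fin p) ℝ :=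
  Matrix.of fun i jp => (A ^ (jp.1 : ℕ) * B) i jp.2

/-- controllability step of Theorem 1: if `(A,B)` is controllable,
`K ≥ 2n`, `Δη_{K+1} = Δq`, `Δη_k = Δq + Aᵀ Δη_{k+1}` for `k = 1,…,K` and
`Bᵀ Δη_{k+1} = 0` for `k = 0,…,K`, then `Δq = 0`. -/
theorem controllability_step {n p K : ℕ}
    (A : Matrix (Fin n) (Fin n) ℝ) (B : Matrix (Fin n) (Fin p) ℝ)
    (hctrb : (ctrbMat A B).rank = n) (hK : 2 * n ≤ K)
    (Δq : Fin n → ℝ) (Δη : ℕ → Fin n → ℝ)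
    (hterm : Δη (K + 1) = Δq)
    (hrec : ∀ k, 1 ≤ k → k ≤ K → Δη k = Δq + Aᵀ.mulVec (Δη (k + 1)))
    (hBη : ∀ k ≤ K, Bᵀ.mulVec (Δη (k + 1)) = 0) :
    Δq = 0 := by
  -- Unrolled form of the recursion
  have hform : ∀ j ≤ K, Δη (K + 1 - j) = ∑ i ∈ Finset.range (j + 1), (Aᵀ ^ i).mulVec Δq := by
    intro j hj
    induction j with
    | zero => simpa using hterm
    | succ j ih =>
      have hjK : j ≤ K := Nat.le_of_succ_le hj
      have h1 : 1 ≤ K - j := by omega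
      have h2 : K - j ≤ K := Nat.sub_le _ _
      have hidx : K + 1 - (j + 1) = K - j := by omega
      have hidx2 : K - j + 1 = K + 1 - j := by omega
      rw [hidx, hrec (K - j) h1 h2, hidx2, ih hjK]
      rw [mulVec_sum', Finset.sum_range_succ' _ (j + 1)]
      simp only [Matrix.mulVec_mulVec, ← pow_succ', pow_zero, Matrix.one_mulVec]
      exact add_comm _ _
  -- B^T (A^T)^j Δq = 0 for all j ≤ K
  have hzero : ∀ j ≤ K, Bᵀ.mulVec ((Aᵀ ^ j).mulVec Δq) = 0 := by
    have hsum : ∀ j ≤ K, Bᵀ.mulVec (∑ i ∈ Finset.range (j + 1), (Aᵀ ^ i).mulVec Δq) = 0 := by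
      intro j hj
      have hk : K - j ≤ K := Nat.sub_le _ _
      have := hBη (K - j) hk
      have hidx : K - j + 1 = K + 1 - j := by omega
      rw [hidx, hform j hj] at this
      exact this
    intro j hj
    induction j with
    | zero =>
      have := hsum 0 (Nat.zero_le _)
      simpa using this
    | succ j ih =>
      have h1 := hsum (j + 1) hj
      have h2 := hsum j (Nat.le_of_succ_le hj)
      rw [Finset.sum_range_succ, Matrix.mulVec_add, h2, zero_add] at h1
      exact h1
  -- Hence the transpose of the controllability matrix kills Δq
  have hM : (ctrbMat A B)ᵀ.mulVec Δq = 0 := by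
    funext jp
    obtain ⟨j, l⟩ := jp
    have hjK : (j : ℕ) ≤ K := by
      have := j.isLt
      omega
    have h := congrFun (hzero j hjK) l
    simp only [Matrix.mulVec_mulVec, ← Matrix.transpose_pow, ← Matrix.transpose_mul] at h
    simp only [Pi.zero_apply] at h ⊢
    rw [← h]
    simp [Matrix.mulVec, Matrix.transpose_apply, ctrbMat, dotProduct]
  -- Full rank ⇒ injectivity of mulVec of the transpose
  have hrankT : ((ctrbMat A B)ᵀ).rank = n := by
    rw [Matrix.rank_transpose]; exact hctrb
  set M := (ctrbMat A B)ᵀ with hMdef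
  have hker : LinearMap.ker M.mulVecLin = ⊥ := by
    have hrn := LinearMap.finrank_range_add_finrank_ker M.mulVecLin
    rw [show Module.finrank ℝ (Fin n → ℝ) = n by simp] at hrn
    have hr : Module.finrank ℝ (LinearMap.range M.mulVecLin) = n := hrankT
    rw [hr] at hrn
    have : Module.finrank ℝ (LinearMap.ker M.mulVecLin) = 0 := by omega
    exact Submodule.finrank_eq_zero.mp this
  have : Δq ∈ LinearMap.ker M.mulVecLin := by
    simpa [Matrix.mulVecLin_apply] using hM
  rw [hker] at this
  simpa using this
end
end

section
/- Equivalence of the data equations with the Riccati recursion: Let X ∈ ℝ^{(n+1)×M} have full row rank, G ∈ ℝ^{p×n}, g ∈ ℝ^p, and set U = [G g]·X and Y = [A 0 B; 0 1 0]·[X; U]. Suppose matrices P⁺, P ∈ ℝ^{n×n}, vectors η⁺, η, q̂ ∈ ℝ^n, Q̂ ∈ ℝ^{n×n}, R̂ ∈ ℝ^{p×p} satisfy Bᵀ[P⁺ η⁺] Y + R̂ U = 0 and Aᵀ[P⁺ η⁺] Y + [Q̂ − P, q̂ − η] X = 0. Then (a) η = q̂ + Aᵀ(P⁺ B g + η⁺)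 and P = Q̂ + Aᵀ(P⁺ B G + P⁺ A); and (b) if R̂ + Bᵀ P⁺ B is invertible, then G = −(R̂ + Bᵀ P⁺ B)⁻¹ Bᵀ P⁺ A and g = −(R̂ + Bᵀ P⁺ B)⁻¹ Bᵀ η⁺. -/
open Matrix

noncomputable section

/-- `[P η]`: the matrix obtained by appending the column `η` to `P` (the extra column is
indexed by `Unit`). -/
def augCol {n : ℕ} {ι : Type*} (P : Matrix ι (Fin n) ℝ) (η : ι → ℝ) :
    Matrix ι (Fin n ⊕ Unit) ℝ :=
  Matrix.of fun i j => Sum.elim (fun l => P i l) (fun _ => η i) j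

/-- The block matrix `[A 0 B; 0 1 0]`. -/
def sysBlock {n p : ℕ} (A : Matrix (Fin n) (Fin n) ℝ) (B : Matrix (Fin n) (Fin p) ℝ) :
    Matrix (Fin n ⊕ Unit) ((Fin n ⊕ Unit) ⊕ Fin p) ℝ :=
  Matrix.fromBlocks (Matrix.fromCols A 0) B (Matrix.fromCols 0 1) 0

lemma augCol_eq_fromColumns {n : ℕ} {ι : Type*} (P : Matrix ι (Fin n) ℝ) (η : ι → ℝ) :
    augCol P η = Matrix.fromCols P (Matrix.replicateCol Unit η) := by
  ext i j
  cases j <;> rfl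

lemma mul_augCol {n : ℕ} {q ι : Type*} [Fintype ι] (W : Matrix q ι ℝ)
    (P : Matrix ι (Fin n) ℝ) (η : ι → ℝ) :
    W * augCol P η = augCol (W * P) (W.mulVec η) := by
  ext i j
  cases j <;> simp [augCol, Matrix.mul_apply, Matrix.mulVec, dotProduct]

lemma augCol_eq_zero {n : ℕ} {ι : Type*} {P : Matrix ι (Fin n) ℝ} {η : ι → ℝ}
    (h : augCol P η = 0) : P = 0 ∧ η = 0 := by
  constructor
  · ext i j; exact congr_fun (congr_fun h i) (Sum.inl j)
  · ext i; exact congr_fun (congr_fun h i) (Sum.inr ())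

/-- one-step equivalence between the data equations (5) and the Riccati
recursion with the feedback-gain formulas.  Here `X` has full row rank, `U = [G g]·X`,
`Y = [A 0 B; 0 1 0]·[X; U]`. -/
theorem data_equations_iff_riccati {n p M : ℕ}
    (A : Matrix (Fin n) (Fin n) ℝ) (B : Matrix (Fin n) (Fin p) ℝ)
    (X : Matrix (Fin n ⊕ Unit) (Fin M) ℝ) (hX : X.rank = n + 1)
    (G : Matrix (Fin p) (Fin n) ℝ) (g : Fin p → ℝ)
    (Pplus P : Matrix (Fin n) (Fin n) ℝ) (ηplus η qh : Fin n → ℝ)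
    (Qh : Matrix (Fin n) (Fin n) ℝ) (Rh : Matrix (Fin p) (Fin p) ℝ)
    (heq1 : Bᵀ * augCol Pplus ηplus * (sysBlock A B * Matrix.fromRows X (augCol G g * X))
        + Rh * (augCol G g * X) = 0)
    (heq2 : Aᵀ * augCol Pplus ηplus * (sysBlock A B * Matrix.fromRows X (augCol G g * X))
        + augCol (Qh - P) (qh - η) * X = 0) :
    (η = qh + Aᵀ.mulVec ((Pplus * B).mulVec g + ηplus) ∧
      P = Qh + Aᵀ * (Pplus * B * G + Pplus * A)) ∧
    (IsUnit (Rh + Bᵀ * Pplus * B) →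
      G = -((Rh + Bᵀ * Pplus * B)⁻¹ * Bᵀ * Pplus * A) ∧
      g = -(((Rh + Bᵀ * Pplus * B)⁻¹ * Bᵀ).mulVec ηplus)) := by
  -- full row rank: rows of X are linearly independent, so right-multiplication by X cancels
  have hli : LinearIndependent ℝ (fun i => X i) := by
    rw [linearIndependent_iff_card_eq_finrank_span]
    have := X.rank_eq_finrank_span_row
    rw [hX] at this
    simp [Set.finrank, Fintype.card_sum, Matrix.row] at this ⊢
    exact this
  have hinj : Function.Injective X.vecMul := Matrix.vecMul_injective_iff.mpr hli
  have hcancel : ∀ {q : Type} [Fintype q] (C : Matrix q (Fin n ⊕ Unit) ℝ),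
      C * X = 0 → C = 0 := by
    intro q _ C hC
    ext i j
    have : X.vecMul (C i) = X.vecMul 0 := by
      ext k
      have := congr_fun (congr_fun hC i) k
      simpa [Matrix.mul_apply, Matrix.vecMul, dotProduct] using this
    have := hinj this
    exact congr_fun this j
  -- rewrite [X; U] = [1; K] X
  set K := augCol G g with hK
  have hfr : Matrix.fromRows X (K * X)
      = Matrix.fromRows (1 : Matrix (Fin n ⊕ Unit) (Fin n ⊕ Unit) ℝ) K * X := by
    rw [Matrix.fromRows_mul, Matrix.one_mul]
  -- the middle factor
  set S : Matrix (Fin n ⊕ Unit) (Fin n ⊕ Unit) ℝ :=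
    sysBlock A B * Matrix.fromRows (1 : Matrix (Fin n ⊕ Unit) (Fin n ⊕ Unit) ℝ) K with hS
  have hSval : S = Matrix.fromRows (Matrix.fromCols A 0 + B * K)
      (Matrix.fromCols 0 1) := by
    rw [hS, sysBlock, Matrix.fromBlocks_mul_fromRows]
    simp
  -- `[P⁺ η⁺] S = [P⁺(A+BG)  P⁺Bg+η⁺]`
  have haugS : augCol Pplus ηplus * S
      = augCol (Pplus * A + Pplus * B * G) ((Pplus * B).mulVec g + ηplus) := by
    rw [hSval, augCol_eq_fromColumns, Matrix.fromCols_mul_fromRows]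
    have hBK : B * K = augCol (B * G) (B.mulVec g) := mul_augCol B G g
    rw [hBK, augCol_eq_fromColumns, augCol_eq_fromColumns]
    ext i j
    cases j with
    | inl j =>
      simp [Matrix.mul_apply, Matrix.add_apply, Matrix.fromCols,
        Matrix.mul_add, Matrix.mulVec, dotProduct, mul_add, Finset.sum_add_distrib,
        Finset.sum_mul, Finset.mul_sum, mul_assoc, Matrix.replicateCol]
      rw [Finset.sum_comm]
    | inr j =>
      simp [Matrix.mul_apply, Matrix.add_apply, Matrix.fromCols,
        Matrix.mulVec, dotProduct, mul_add, Finset.sum_add_distrib,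
        Finset.mul_sum, mul_assoc, Matrix.replicateCol]
      rw [Finset.sum_comm]
      simp [Finset.sum_mul, mul_assoc]
  -- coefficient equations
  have h1 : Bᵀ * (augCol Pplus ηplus * S) + Rh * K = 0 := by
    apply hcancel
    have e : (Bᵀ * (augCol Pplus ηplus * S) + Rh * K) * X
        = Bᵀ * augCol Pplus ηplus * (sysBlock A B * Matrix.fromRows X (K * X))
          + Rh * (K * X) := by
      rw [hfr]
      simp only [hS, Matrix.add_mul, Matrix.mul_assoc]
    rw [e]; exact heq1
  have h2 : Aᵀ * (augCol Pplus ηplus * S) + augCol (Qh - P) (qh - η) = 0 := by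
    apply hcancel
    have e : (Aᵀ * (augCol Pplus ηplus * S) + augCol (Qh - P) (qh - η)) * X
        = Aᵀ * augCol Pplus ηplus * (sysBlock A B * Matrix.fromRows X (K * X))
          + augCol (Qh - P) (qh - η) * X := by
      rw [hfr]
      simp only [hS, Matrix.add_mul, Matrix.mul_assoc]
    rw [e]; exact heq2
  rw [haugS, mul_augCol] at h1 h2
  rw [hK, mul_augCol] at h1
  -- split into components
  have h1' : Bᵀ * (Pplus * A + Pplus * B * G) + Rh * G = 0 ∧
      Bᵀ.mulVec ((Pplus * B).mulVec g + ηplus) + Rh.mulVec g = 0 := by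
    have := augCol_eq_zero (P := Bᵀ * (Pplus * A + Pplus * B * G) + Rh * G)
      (η := Bᵀ.mulVec ((Pplus * B).mulVec g + ηplus) + Rh.mulVec g) ?_
    · exact this
    · ext i j
      have := congr_fun (congr_fun h1 i) j
      cases j <;> simpa [augCol, Matrix.add_apply, Matrix.mulVec] using this
  have h2' : Aᵀ * (Pplus * A + Pplus * B * G) + (Qh - P) = 0 ∧
      Aᵀ.mulVec ((Pplus * B).mulVec g + ηplus) + (qh - η) = 0 := by
    have := augCol_eq_zero (P := Aᵀ * (Pplus * A + Pplus * B * G) + (Qh - P))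
      (η := Aᵀ.mulVec ((Pplus * B).mulVec g + ηplus) + (qh - η)) ?_
    · exact this
    · ext i j
      have := congr_fun (congr_fun h2 i) j
      cases j <;> simpa [augCol, Matrix.add_apply, Matrix.mulVec] using this
  obtain ⟨h1a, h1b⟩ := h1'
  obtain ⟨h2a, h2b⟩ := h2'
  refine ⟨⟨?_, ?_⟩, ?_⟩
  · -- η
    have : η = qh + Aᵀ.mulVec ((Pplus * B).mulVec g + ηplus) := by
      have := h2b
      funext i
      have hi := congr_fun this i
      simp [Pi.add_apply, Pi.sub_apply] at hi ⊢
      linarith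
    exact this
  · -- P
    have : P = Aᵀ * (Pplus * A + Pplus * B * G) + Qh := by
      have h := h2a
      ext i j
      have hij := congr_fun (congr_fun h i) j
      simp [Matrix.add_apply, Matrix.sub_apply] at hij ⊢
      linarith
    rw [this, Matrix.mul_add, Matrix.mul_add]
    abel
  · -- invertible case
    intro hU
    have hdet : IsUnit (Rh + Bᵀ * Pplus * B).det :=
      (Matrix.isUnit_iff_isUnit_det _).mp hU
    haveI := (Rh + Bᵀ * Pplus * B).invertibleOfIsUnitDet hdet
    set Mmat := Rh + Bᵀ * Pplus * B with hM
    have hMG : Mmat * G = -(Bᵀ * Pplus * A) := by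
      have h := h1a
      rw [Matrix.mul_add] at h
      rw [hM, Matrix.add_mul, eq_neg_iff_add_eq_zero]
      simp only [Matrix.mul_assoc] at h ⊢
      rw [← h]; abel
    have hMg : Mmat.mulVec g = -(Bᵀ.mulVec ηplus) := by
      have h := h1b
      rw [Matrix.mulVec_add, Matrix.mulVec_mulVec] at h
      rw [hM, Matrix.add_mulVec, eq_neg_iff_add_eq_zero]
      simp only [Matrix.mul_assoc] at h ⊢
      rw [← h]; abel
    constructor
    · have : Mmat⁻¹ * (Mmat * G) = Mmat⁻¹ * -(Bᵀ * Pplus * A) := by rw [hMG]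
      rw [← Matrix.mul_assoc, Matrix.nonsing_inv_mul _ hdet, Matrix.one_mul] at this
      rw [this, Matrix.mul_neg]
      simp [Matrix.mul_assoc]
    · have : Mmat⁻¹.mulVec (Mmat.mulVec g) = Mmat⁻¹.mulVec (-(Bᵀ.mulVec ηplus)) := by
        rw [hMg]
      rw [Matrix.mulVec_mulVec, Matrix.nonsing_inv_mul _ hdet, Matrix.one_mulVec] at this
      rw [this]
      rw [Matrix.mulVec_neg, Matrix.mulVec_mulVec]
end
end

section
/- Non-uniqueness of the inverse LQT problem: Let Q be symmetric positive semidefinite, R symmetric positive definite, d ∈ ℝ^n, α > 0, and v ∈ ℝ^n with Q v = 0. Denote by (P_k, η_k, Ψ_k, ψ_k) the LQT Riccati quantities generated by (Q, R, d) and by (P'_k, η'_k, Ψ'_k, ψ'_k) those generated by (αQ, αR, d + v). Then P'_k = α P_k, η'_k = α η_k, Ψ'_k = Ψ_k and ψ'_k = ψ_k for all k; hence the LQT feedback policies coincide: π_k(αQ, αR, d+v, x) = π_k(Q, R, d, x) for all k and all x ∈ ℝ^n. -/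
open Matrix

lemma smul_inv_aux {m : ℕ} (a : ℝ) (ha : a ≠ 0) (M : Matrix (Fin m) (Fin m) ℝ) :
    (a • M)⁻¹ = a⁻¹ • M⁻¹ := by
  by_cases h : IsUnit M.det
  · have : Invertible a := invertibleOfNonzero ha
    rw [Matrix.inv_smul (A := M) a h, invOf_eq_inv]
  · have h2 : ¬ IsUnit (a • M).det := by
      rw [Matrix.det_smul]
      simpa [isUnit_iff_ne_zero, pow_eq_zero_iff, ha] using h
    rw [Matrix.nonsing_inv_apply_not_isUnit _ h2, Matrix.nonsing_inv_apply_not_isUnit _ h,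
      smul_zero]

/-- non-uniqueness of the inverse LQT problem: with `Q ⪰ 0`, `R ≻ 0`,
`α > 0` and `Q v = 0`, the LQT Riccati quantities generated by `(αQ, αR, d + v)` satisfy
`P'_k = αP_k`, `η'_k = αη_k`, `Ψ'_k = Ψ_k`, `ψ'_k = ψ_k`, so the feedback policies
`π_k(αQ, αR, d+v, ·)` and `π_k(Q, R, d, ·)` coincide. -/
theorem lqt_nonuniqueness {n p K : ℕ}
    (A : Matrix (Fin n) (Fin n) ℝ) (B : Matrix (Fin n) (Fin p) ℝ)
    (Q : Matrix (Fin n) (Fin n) ℝ) (R : Matrix (Fin p) (Fin p) ℝ) (d : Fin n → ℝ)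
    (α : ℝ) (v : Fin n → ℝ)
    (hQ : Q.PosSemidef) (hR : R.PosDef) (hα : 0 < α) (hv : Q.mulVec v = 0)
    -- Riccati quantities generated by (Q, R, d)
    (P : ℕ → Matrix (Fin n) (Fin n) ℝ) (η : ℕ → Fin n → ℝ)
    (Ψ : ℕ → Matrix (Fin p) (Fin n) ℝ) (ψ : ℕ → Fin p → ℝ)
    (hPK : P (K + 1) = Q) (hηK : η (K + 1) = -(Q.mulVec d))
    (hΨ : ∀ k ≤ K, Ψ k = -((R + Bᵀ * P (k + 1) * B)⁻¹ * Bᵀ * P (k + 1) * A))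
    (hψ : ∀ k ≤ K, ψ k = -(((R + Bᵀ * P (k + 1) * B)⁻¹ * Bᵀ).mulVec (η (k + 1))))
    (hP : ∀ k, 1 ≤ k → k ≤ K → P k = Q + Aᵀ * (P (k + 1) * B * Ψ k + P (k + 1) * A))
    (hη : ∀ k, 1 ≤ k → k ≤ K →
      η k = -(Q.mulVec d) + Aᵀ.mulVec ((P (k + 1) * B).mulVec (ψ k) + η (k + 1)))
    -- Riccati quantities generated by (αQ, αR, d + v)
    (P' : ℕ → Matrix (Fin n) (Fin n) ℝ) (η' : ℕ → Fin n → ℝ)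
    (Ψ' : ℕ → Matrix (Fin p) (Fin n) ℝ) (ψ' : ℕ → Fin p → ℝ)
    (hPK' : P' (K + 1) = α • Q) (hηK' : η' (K + 1) = -((α • Q).mulVec (d + v)))
    (hΨ' : ∀ k ≤ K,
      Ψ' k = -((α • R + Bᵀ * P' (k + 1) * B)⁻¹ * Bᵀ * P' (k + 1) * A))
    (hψ' : ∀ k ≤ K,
      ψ' k = -(((α • R + Bᵀ * P' (k + 1) * B)⁻¹ * Bᵀ).mulVec (η' (k + 1))))
    (hP' : ∀ k, 1 ≤ k → k ≤ K →
      P' k = α • Q + Aᵀ * (P' (k + 1) * B * Ψ' k + P' (k + 1) * A))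
    (hη' : ∀ k, 1 ≤ k → k ≤ K →
      η' k = -((α • Q).mulVec (d + v))
        + Aᵀ.mulVec ((P' (k + 1) * B).mulVec (ψ' k) + η' (k + 1))) :
    (∀ k, 1 ≤ k → k ≤ K + 1 → P' k = α • P k ∧ η' k = α • η k) ∧
    (∀ k ≤ K, Ψ' k = Ψ k ∧ ψ' k = ψ k) ∧
    (∀ k ≤ K, ∀ x : Fin n → ℝ,
      (Ψ' k).mulVec x + ψ' k = (Ψ k).mulVec x + ψ k) := by
  have hα0 : α ≠ 0 := ne_of_gt hα
  have hQdv : (α • Q).mulVec (d + v) = α • Q.mulVec d := by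
    rw [Matrix.smul_mulVec, Matrix.mulVec_add, hv, add_zero]
  have hηK'' : η' (K + 1) = α • η (K + 1) := by
    rw [hηK', hηK, hQdv, smul_neg]
  have hPK'' : P' (K + 1) = α • P (K + 1) := by rw [hPK', hPK]
  -- the one-step transfer
  have stepΨ : ∀ k ≤ K, P' (k + 1) = α • P (k + 1) → Ψ' k = Ψ k := by
    intro k hk h1
    rw [hΨ' k hk, hΨ k hk, h1]
    have hM : α • R + Bᵀ * (α • P (k + 1)) * B = α • (R + Bᵀ * P (k + 1) * B) := by
      rw [Matrix.mul_smul, Matrix.smul_mul, smul_add]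
    rw [hM, smul_inv_aux α hα0]
    simp [Matrix.smul_mul, Matrix.mul_smul, smul_smul, mul_inv_cancel₀ hα0]
  have stepψ : ∀ k ≤ K, P' (k + 1) = α • P (k + 1) → η' (k + 1) = α • η (k + 1) →
      ψ' k = ψ k := by
    intro k hk h1 h2
    rw [hψ' k hk, hψ k hk, h1, h2]
    have hM : α • R + Bᵀ * (α • P (k + 1)) * B = α • (R + Bᵀ * P (k + 1) * B) := by
      rw [Matrix.mul_smul, Matrix.smul_mul, smul_add]
    rw [hM, smul_inv_aux α hα0, Matrix.smul_mul, Matrix.smul_mulVec,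
      Matrix.mulVec_smul, smul_smul, inv_mul_cancel₀ hα0, one_smul]
  -- downward induction
  have main : ∀ j ≤ K, P' (K + 1 - j) = α • P (K + 1 - j) ∧
      η' (K + 1 - j) = α • η (K + 1 - j) := by
    intro j
    induction j with
    | zero => intro _; simpa using ⟨hPK'', hηK''⟩
    | succ j ih =>
      intro hj
      obtain ⟨ihP, ihη⟩ := ih (by omega)
      set k := K + 1 - (j + 1) with hkdef
      have hk1 : K + 1 - j = k + 1 := by omega
      have hkK : k ≤ K := by omega
      have h1k : 1 ≤ k := by omega
      rw [hk1] at ihP ihη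
      have hΨk := stepΨ k hkK ihP
      have hψk := stepψ k hkK ihP ihη
      constructor
      · rw [hP' k h1k hkK, hP k h1k hkK, hΨk, ihP, Matrix.smul_mul, Matrix.smul_mul,
          Matrix.smul_mul, ← smul_add, Matrix.mul_smul, smul_add]
      · rw [hη' k h1k hkK, hη k h1k hkK, hψk, ihP, ihη, hQdv, Matrix.smul_mul,
          Matrix.smul_mulVec, ← smul_add, Matrix.mulVec_smul]
        module
  have mainK : ∀ k, 1 ≤ k → k ≤ K + 1 → P' k = α • P k ∧ η' k = α • η k := by
    intro k h1 h2
    have := main (K + 1 - k) (by omega)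
    have hk : K + 1 - (K + 1 - k) = k := by omega
    rwa [hk] at this
  have mainΨψ : ∀ k ≤ K, Ψ' k = Ψ k ∧ ψ' k = ψ k := by
    intro k hk
    obtain ⟨hP1, hη1⟩ := mainK (k + 1) (by omega) (by omega)
    exact ⟨stepΨ k hk hP1, stepψ k hk hP1 hη1⟩
  refine ⟨mainK, mainΨψ, fun k hk x => ?_⟩
  rw [(mainΨψ k hk).1, (mainΨψ k hk).2]
end

section
/- Induction step of Theorem 1 (equality of Markov-type parameters): Let A ∈ ℝ^{n×n} be invertible, B ∈ ℝ^{n×p}, R, R̂ ∈ ℝ^{p×p} invertible, Q, Q̂ ∈ ℝ^{n×n}, and let {P_k}_{k=1}^{K+1}, {P̂_k}_{k=1}^{K+1} satisfy P_{K+1} = Q, P̂_{K+1} = Q̂, P_k = Q + Aᵀ P_{k+1}(A + BΨ_k) and P̂_k = Q̂ + Aᵀ P̂_{k+1}(A + BΨ_k) for k = 1,…,K, where the matrices A + BΨ_k are invertible and common to both recursions. If R⁻¹ Bᵀ P_{k+1} = R̂⁻¹ Bᵀ P̂_{k+1} for all k = 0,…,K, then R⁻¹ Bᵀ (Aᵀ)^j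 Q = R̂⁻¹ Bᵀ (Aᵀ)^j Q̂ for all j = 0,…,K−1. -/
open Matrix

/-- induction step of Theorem 1, equality of Markov-type parameters: two
cost parameterizations generating the same closed-loop Riccati data satisfy
`R⁻¹ Bᵀ (Aᵀ)^j Q = R̂⁻¹ Bᵀ (Aᵀ)^j Q̂` for all `j = 0,…,K−1`. -/
theorem markov_parameters_equal {n p K : ℕ}
    (A : Matrix (Fin n) (Fin n) ℝ) (B : Matrix (Fin n) (Fin p) ℝ)
    (R Rh : Matrix (Fin p) (Fin p) ℝ) (Q Qh : Matrix (Fin n) (Fin n) ℝ)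
    (P Ph : ℕ → Matrix (Fin n) (Fin n) ℝ) (Ψ : ℕ → Matrix (Fin p) (Fin n) ℝ)
    (hA : IsUnit A) (hR : IsUnit R) (hRh : IsUnit Rh)
    (hPK : P (K + 1) = Q) (hPhK : Ph (K + 1) = Qh)
    (hrec : ∀ k, 1 ≤ k → k ≤ K → P k = Q + Aᵀ * P (k + 1) * (A + B * Ψ k))
    (hrech : ∀ k, 1 ≤ k → k ≤ K → Ph k = Qh + Aᵀ * Ph (k + 1) * (A + B * Ψ k))
    (hcl : ∀ k, 1 ≤ k → k ≤ K → IsUnit (A + B * Ψ k))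
    (hgain : ∀ k ≤ K, R⁻¹ * Bᵀ * P (k + 1) = Rh⁻¹ * Bᵀ * Ph (k + 1)) :
    ∀ j < K, R⁻¹ * Bᵀ * Aᵀ ^ j * Q = Rh⁻¹ * Bᵀ * Aᵀ ^ j * Qh := by
  have key : ∀ j, ∀ k, j + 1 ≤ k → k ≤ K + 1 →
      R⁻¹ * Bᵀ * Aᵀ ^ j * P k = Rh⁻¹ * Bᵀ * Aᵀ ^ j * Ph k := by
    intro j
    induction j with
    | zero =>
      intro k hk1 hk2
      obtain ⟨m, rfl⟩ : ∃ m, k = m + 1 := ⟨k - 1, by omega⟩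
      simpa [pow_zero, mul_one] using hgain m (by omega)
    | succ j ih =>
      intro k hk1 hk2
      obtain ⟨m, rfl⟩ : ∃ m, k = m + 1 := ⟨k - 1, by omega⟩
      have hm1 : 1 ≤ m := by omega
      have hm2 : m ≤ K := by omega
      have hEj : R⁻¹ * Bᵀ * Aᵀ ^ j * Q = Rh⁻¹ * Bᵀ * Aᵀ ^ j * Qh := by
        have := ih (K + 1) (by omega) le_rfl
        rwa [hPK, hPhK] at this
      have h1 := ih m (by omega) (by omega)
      rw [hrec m hm1 hm2, hrech m hm1 hm2] at h1
      have h2 : R⁻¹ * Bᵀ * Aᵀ ^ (j + 1) * P (m + 1) * (A + B * Ψ m)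
          = Rh⁻¹ * Bᵀ * Aᵀ ^ (j + 1) * Ph (m + 1) * (A + B * Ψ m) := by
        have e1 : R⁻¹ * Bᵀ * Aᵀ ^ j * (Q + Aᵀ * P (m + 1) * (A + B * Ψ m))
            = R⁻¹ * Bᵀ * Aᵀ ^ j * Q
              + R⁻¹ * Bᵀ * Aᵀ ^ (j + 1) * P (m + 1) * (A + B * Ψ m) := by
          simp only [Matrix.mul_add, mul_add, pow_succ, Matrix.mul_assoc]
        have e2 : Rh⁻¹ * Bᵀ * Aᵀ ^ j * (Qh + Aᵀ * Ph (m + 1) * (A + B * Ψ m))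
            = Rh⁻¹ * Bᵀ * Aᵀ ^ j * Qh
              + Rh⁻¹ * Bᵀ * Aᵀ ^ (j + 1) * Ph (m + 1) * (A + B * Ψ m) := by
          simp only [Matrix.mul_add, mul_add, pow_succ, Matrix.mul_assoc]
        rw [e1, e2, hEj] at h1
        exact add_left_cancel h1
      have hdet : IsUnit (A + B * Ψ m).det :=
        (Matrix.isUnit_iff_isUnit_det _).mp (hcl m hm1 hm2)
      have := congrArg (· * (A + B * Ψ m)⁻¹) h2
      simpa [Matrix.mul_nonsing_inv_cancel_right _ _ hdet] using this
  intro j hj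
  have := key j (K + 1) (by omega) le_rfl
  rwa [hPK, hPhK] at this
end
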